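/- Three-term cycle law: suppose q₁, q₂, q₃ ∈ ℝ with q₁ ≠ 1, q₂ = ℓ(a₁₂)·q₁, q₃ = ℓ(a₂₃)·q₂, and q₁ = ℓ(a₃₁)·q₃ (all actions well-defined). Then a₃₁ − a₂₃ + a₁₂ = (1 + q₁)/(1 − q₁). -/

import Mathlib

/-! Under the Cayley transform `cayley q = (1 + q) / (1 - q)`, the action of `ℓ(a)` becomes the
reflection `t ↦ 2a - t`. Going once around the cycle composes three reflections, so
`cayley q₁ = 2 (a₃₁ - a₂₃ + a₁₂) - cayley q₁`. -/

noncomputable def mobiusL (a q : ℝ) : ℝ := (a * q + 1 - a) / ((1 + a) * q - a)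

noncomputable def cayley (q : ℝ) : ℝ := (1 + q) / (1 - q)

section

variable {a q : ℝ}

lemma one_sub_mobiusL (hd : (1 + a) * q - a ≠ 0) :
    1 - mobiusL a q = (q - 1) / ((1 + a) * q - a) := by
  rw [mobiusL, eq_div_iff hd, sub_mul, div_mul_cancel₀ _ hd]
  ring

lemma one_add_mobiusL (hd : (1 + a) * q - a ≠ 0) :
    1 + mobiusL a q = (1 + q + 2 * a * (q - 1)) / ((1 + a) * q - a) := by
  rw [mobiusL, eq_div_iff hd, add_mul, div_mul_cancel₀ _ hd]
  ring

lemma mobiusL_ne_one (hq : q ≠ 1) (hd : (1 + a) * q - a ≠ 0) : mobiusL a q ≠ 1 := by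
  rw [ne_comm, ← sub_ne_zero, one_sub_mobiusL hd]
  exact div_ne_zero (sub_ne_zero.2 hq) hd

lemma cayley_mobiusL (hq : q ≠ 1) (hd : (1 + a) * q - a ≠ 0) :
    cayley (mobiusL a q) = 2 * a - cayley q := by
  have hq' : q - 1 ≠ 0 := sub_ne_zero.2 hq
  have hq'' : 1 - q ≠ 0 := sub_ne_zero.2 hq.symm
  rw [cayley, cayley, one_add_mobiusL hd, one_sub_mobiusL hd, div_div_div_cancel_right₀ hd]
  field_simp
  ring

end

theorem three_term_cycle (q1 q2 q3 a12 a23 a31 : ℝ)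
    (hq1 : q1 ≠ 1)
    (hd12 : (1 + a12) * q1 - a12 ≠ 0)
    (hd23 : (1 + a23) * q2 - a23 ≠ 0)
    (hd31 : (1 + a31) * q3 - a31 ≠ 0)
    (h12 : q2 = mobiusL a12 q1)
    (h23 : q3 = mobiusL a23 q2)
    (h31 : q1 = mobiusL a31 q3) :
    a31 - a23 + a12 = (1 + q1) / (1 - q1) := by
  have hq2 : q2 ≠ 1 := h12 ▸ mobiusL_ne_one hq1 hd12
  have hq3 : q3 ≠ 1 := h23 ▸ mobiusL_ne_one hq2 hd23
  have t2 : cayley q2 = 2 * a12 - cayley q1 := h12 ▸ cayley_mobiusL hq1 hd12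
  have t3 : cayley q3 = 2 * a23 - cayley q2 := h23 ▸ cayley_mobiusL hq2 hd23
  have t1 : cayley q1 = 2 * a31 - cayley q3 := by
    conv_lhs => rw [h31]
    exact cayley_mobiusL hq3 hd31
  change _ = cayley q1
  linarith
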